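/- All entries of the inverse of the n×n tridiagonal matrix A (with 2 on the diagonal and -1 on the off-diagonals) are positive; explicitly, (A^{-1})_{i,j} = min(i,j)·(n+1-max(i,j))/(n+1) > 0 for all 1 ≤ i,j ≤ n. -/
import Mathlib

private def gfun (n j x : ℕ) : ℚ :=
  ((min x (j+1) : ℕ) : ℚ) * (((n:ℚ)+1) - ((max x (j+1) : ℕ) : ℚ)) / ((n:ℚ)+1)

private lemma gfun_zero (n j : ℕ) : gfun n j 0 = 0 := by
  simp [gfun]

private lemma gfun_top (n j : ℕ) (hj : j < n) : gfun n j (n+1) = 0 := by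
  have h1 : max (n+1) (j+1) = n+1 := by omega
  simp only [gfun, h1]
  push_cast
  ring

private lemma key (n i j : ℕ) (hi : i < n) (hj : j < n) :
    2 * gfun n j (i+1) - gfun n j (i+2) - gfun n j i = if i = j then 1 else 0 := by
  have hN : ((n:ℚ)+1) ≠ 0 := by positivity
  rcases lt_trichotomy i j with h | h | h
  · have h1 : min (i+1) (j+1) = i+1 := by omega
    have h2 : max (i+1) (j+1) = j+1 := by omega
    have h3 : min (i+2) (j+1) = i+2 := by omega
    have h4 : max (i+2) (j+1) = j+1 := by omega
    have h5 : min i (j+1) = i := by omega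
    have h6 : max i (j+1) = j+1 := by omega
    simp only [gfun, h1, h2, h3, h4, h5, h6, if_neg (by omega : ¬ i = j)]
    push_cast
    field_simp
    ring
  · subst h
    have h1 : min (i+1) (i+1) = i+1 := by omega
    have h2 : max (i+1) (i+1) = i+1 := by omega
    have h3 : min (i+2) (i+1) = i+1 := by omega
    have h4 : max (i+2) (i+1) = i+2 := by omega
    have h5 : min i (i+1) = i := by omega
    have h6 : max i (i+1) = i+1 := by omega
    simp only [gfun, h1, h2, h3, h4, h5, h6, if_pos rfl]
    push_cast
    field_simp
    ring
  · have h1 : min (i+1) (j+1) = j+1 := by omega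
    have h2 : max (i+1) (j+1) = i+1 := by omega
    have h3 : min (i+2) (j+1) = j+1 := by omega
    have h4 : max (i+2) (j+1) = i+2 := by omega
    have h5 : min i (j+1) = j+1 := by omega
    have h6 : max i (j+1) = i := by omega
    simp only [gfun, h1, h2, h3, h4, h5, h6, if_neg (by omega : ¬ i = j)]
    push_cast
    field_simp
    ring

/-- All entries of the inverse of the tridiagonal matrix `A` are positive; explicitly the
inverse is `B` with `B i j = min(i,j)(n+1-max(i,j))/(n+1) > 0`. -/
theorem stmt_16 (n : ℕ) (hn : 0 < n)
    (A B : Matrix (Fin n) (Fin n) ℚ)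
    (hA : ∀ i j : Fin n, A i j =
      if i = j then 2 else if (i : ℕ) + 1 = j ∨ (j : ℕ) + 1 = i then -1 else 0)
    (hB : ∀ i j : Fin n, B i j =
      ((min ((i : ℕ) + 1) ((j : ℕ) + 1) : ℕ) : ℚ) *
        ((n : ℚ) + 1 - ((max ((i : ℕ) + 1) ((j : ℕ) + 1) : ℕ) : ℚ)) / ((n : ℚ) + 1)) :
    A * B = 1 ∧ B * A = 1 ∧ ∀ i j : Fin n, 0 < B i j := by
  have hBg : ∀ i j : Fin n, B i j = gfun n (j : ℕ) ((i : ℕ) + 1) := by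
    intro i j; rw [hB]; rfl
  have hAB : A * B = 1 := by
    ext i j
    rw [Matrix.mul_apply]
    have hterm : ∀ k : Fin n, A i k * B k j =
        (if (k : ℕ) = (i : ℕ) then 2 * gfun n (j:ℕ) ((i:ℕ)+1) else 0)
        - (if (k : ℕ) = (i : ℕ) + 1 then gfun n (j:ℕ) ((i:ℕ)+2) else 0)
        - (if (k : ℕ) + 1 = (i : ℕ) then gfun n (j:ℕ) ((i:ℕ)) else 0) := by
      intro k
      rw [hA, hBg]
      simp only [Fin.ext_iff]
      split_ifs
      all_goals first
        | (exfalso; omega)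
        | (rw [show (k:ℕ)+1 = (i:ℕ)+1 from by omega]; ring)
        | (rw [show (k:ℕ)+1 = (i:ℕ)+2 from by omega]; ring)
        | (rw [show (k:ℕ)+1 = (i:ℕ) from by omega]; ring)
        | ring
    have e1 : ∑ k : Fin n, (if (k : ℕ) = (i : ℕ) then 2 * gfun n (j:ℕ) ((i:ℕ)+1) else 0)
        = 2 * gfun n (j:ℕ) ((i:ℕ)+1) := by
      rw [Finset.sum_eq_single i]
      · simp
      · intro k _ hk; exact if_neg (fun hh => hk (Fin.ext hh))
      · simp
    have e2 : ∑ k : Fin n, (if (k : ℕ) = (i : ℕ) + 1 then gfun n (j:ℕ) ((i:ℕ)+2) else 0)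
        = gfun n (j:ℕ) ((i:ℕ)+2) := by
      by_cases h : (i:ℕ)+1 < n
      · rw [Finset.sum_eq_single (⟨(i:ℕ)+1, h⟩ : Fin n)]
        · simp
        · intro k _ hk; exact if_neg (fun hh => hk (Fin.ext hh))
        · simp
      · have hn1 : (i:ℕ)+2 = n+1 := by have := i.isLt; omega
        rw [hn1, gfun_top n (j:ℕ) j.isLt]
        apply Finset.sum_eq_zero; intro k _
        exact if_neg (by have := k.isLt; omega)
    have e3 : ∑ k : Fin n, (if (k : ℕ) + 1 = (i : ℕ) then gfun n (j:ℕ) ((i:ℕ)) else 0)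
        = gfun n (j:ℕ) ((i:ℕ)) := by
      by_cases h : 0 < (i:ℕ)
      · rw [Finset.sum_eq_single (⟨(i:ℕ)-1, by have := i.isLt; omega⟩ : Fin n)]
        · exact if_pos (by simp; omega)
        · intro k _ hk
          exact if_neg (fun hh => hk (Fin.ext (by simpa using by omega)))
        · simp
      · have h0 : (i:ℕ) = 0 := by omega
        rw [h0, gfun_zero]
        apply Finset.sum_eq_zero; intro k _
        exact if_neg (by omega)
    rw [Finset.sum_congr rfl (fun k _ => hterm k), Finset.sum_sub_distrib,
      Finset.sum_sub_distrib, e1, e2, e3, key n (i:ℕ) (j:ℕ) i.isLt j.isLt]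
    simp [Matrix.one_apply, Fin.ext_iff]
  refine ⟨hAB, mul_eq_one_comm.mp hAB, ?_⟩
  intro i j
  rw [hB]
  apply div_pos
  · apply mul_pos
    · exact_mod_cast Nat.cast_pos.mpr (by omega : 0 < min ((i:ℕ)+1) ((j:ℕ)+1))
    · have hm : (max ((i:ℕ)+1) ((j:ℕ)+1)) ≤ n := by
        have := i.isLt; have := j.isLt; omega
      have : ((max ((i:ℕ)+1) ((j:ℕ)+1) : ℕ) : ℚ) ≤ (n : ℚ) := by exact_mod_cast hm
      linarith
  · positivity
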